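/- If cov(meager) < 𝔠 for the unit interval, then tf([0,1]) ≤ tf(2^ω); that is, if [0,1] is a union of fewer than 𝔠 nowhere dense sets, then the minimal size of a transitive family of continuous self-maps of [0,1] is at most the minimal size of a transitive family of continuous self-maps of the Cantor set. -/

import Mathlib

open Cardinal

noncomputable section
namespace TFP
open Set

/-- the `n`-th binary digit contribution -/
def term (x : ℕ → Bool) (n : ℕ) : ℝ := cond (x n) ((1/2 : ℝ)^(n+1)) 0

lemma term_nonneg (x : ℕ → Bool) (n : ℕ) : 0 ≤ term x n := by
  cases h : x n <;> simp [term, h] <;> positivity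

lemma term_le (x : ℕ → Bool) (n : ℕ) : term x n ≤ (1/2:ℝ)^(n+1) := by
  cases h : x n <;> simp [term, h] <;> positivity

lemma summable_w : Summable (fun n : ℕ => (1/2:ℝ)^(n+1)) := by
  simpa [pow_succ, mul_comm] using summable_geometric_two.mul_left (1/2 : ℝ)

lemma tsum_w : ∑' n : ℕ, (1/2:ℝ)^(n+1) = 1 := by
  have h := tsum_geometric_two' 1
  have he : (fun n : ℕ => (1/2:ℝ)^(n+1)) = fun n : ℕ => 1 / 2 / 2 ^ n := by
    funext n; rw [pow_succ, one_div_pow]; ring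
  rw [he, h]

lemma summable_term (x : ℕ → Bool) : Summable (term x) :=
  Summable.of_nonneg_of_le (term_nonneg x) (term_le x) summable_w

/-- the binary-expansion map from Cantor space onto `[0,1]`. -/
def q (x : ℕ → Bool) : ℝ := ∑' n, term x n

lemma q_nonneg (x : ℕ → Bool) : 0 ≤ q x := tsum_nonneg (term_nonneg x)

lemma q_le_one (x : ℕ → Bool) : q x ≤ 1 := by
  have h := Summable.tsum_le_tsum (term_le x) (summable_term x) summable_w
  rw [tsum_w] at h
  exact h

lemma q_mem (x : ℕ → Bool) : q x ∈ Icc (0:ℝ) 1 := ⟨q_nonneg x, q_le_one x⟩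

/-- tail sums bound -/
lemma tsum_w_add (n : ℕ) : ∑' k : ℕ, (1/2:ℝ)^(n+k+1) = (1/2:ℝ)^n := by
  have : (fun k : ℕ => (1/2:ℝ)^(n+k+1)) = fun k => (1/2:ℝ)^n * (1/2:ℝ)^(k+1) := by
    funext k; rw [← pow_add]; ring_nf
  rw [this, tsum_mul_left, tsum_w, mul_one]

lemma q_prefix_close {x y : ℕ → Bool} {n : ℕ} (h : ∀ i < n, x i = y i) :
    |q x - q y| ≤ (1/2:ℝ)^n := by
  have hsub : q x - q y = ∑' m, (term x m - term y m) :=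
    (Summable.tsum_sub (summable_term x) (summable_term y)).symm
  rw [hsub]
  have hb : ∀ m, |term x m - term y m| ≤ (if m < n then 0 else (1/2:ℝ)^(m+1)) := by
    intro m
    by_cases hm : m < n
    · simp [term, h m hm, hm]
    · simp only [if_neg hm]
      have h1 := term_nonneg x m
      have h2 := term_nonneg y m
      have h3 := term_le x m
      have h4 := term_le y m
      rw [abs_sub_le_iff]; constructor <;> linarith
  have hsummable : Summable fun m => (if m < n then 0 else (1/2:ℝ)^(m+1)) := by
    apply Summable.of_nonneg_of_le _ _ summable_w
    · intro m; by_cases hm : m < n <;> simp [hm] <;> positivity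
    · intro m; by_cases hm : m < n <;> simp [hm] <;> positivity
  have habs : Summable fun m => |term x m - term y m| :=
    Summable.of_nonneg_of_le (fun m => abs_nonneg _) hb hsummable
  calc |∑' m, (term x m - term y m)| ≤ ∑' m, |term x m - term y m| := by
        have := norm_tsum_le_tsum_norm (f := fun m => term x m - term y m)
          (by simpa [Real.norm_eq_abs] using habs)
        simpa [Real.norm_eq_abs] using this
      _ ≤ ∑' m, (if m < n then 0 else (1/2:ℝ)^(m+1)) := Summable.tsum_le_tsum hb habs hsummable
      _ ≤ (1/2:ℝ)^n := by
        rw [← Summable.sum_add_tsum_nat_add n hsummable]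
        have h1 : ∑ m ∈ Finset.range n, (if m < n then 0 else (1/2:ℝ)^(m+1)) = 0 := by
          apply Finset.sum_eq_zero; intro m hm; simp [Finset.mem_range.mp hm]
        have h2 : ∑' k : ℕ, (if k + n < n then 0 else (1/2:ℝ)^(k+n+1)) = (1/2:ℝ)^n := by
          rw [← tsum_w_add n]
          congr 1; funext k
          have : ¬ (k + n < n) := by omega
          simp [this]; ring_nf
        rw [h1, h2]; linarith


section surj
variable (r : ℝ)

/-- greedy partial sums for the binary expansion of `r` -/
def gs (r : ℝ) : ℕ → ℝ
  | 0 => 0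
  | (n+1) => gs r n + (if gs r n + (1/2:ℝ)^(n+1) ≤ r then (1/2:ℝ)^(n+1) else 0)

open Classical in
/-- greedy digits -/
def gx (r : ℝ) (n : ℕ) : Bool := if gs r n + (1/2:ℝ)^(n+1) ≤ r then true else false

lemma gs_term (n : ℕ) : gs r (n+1) = gs r n + term (gx r) n := by
  classical
  rw [gs, term, gx]
  by_cases h : gs r n + (1/2:ℝ)^(n+1) ≤ r <;> simp [h]

lemma gs_invariant (hr : r ∈ Icc (0:ℝ) 1) (n : ℕ) :
    0 ≤ r - gs r n ∧ r - gs r n ≤ (1/2:ℝ)^n := by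
  classical
  induction n with
  | zero => simpa [gs] using hr
  | succ n ih =>
    rw [gs]
    by_cases h : gs r n + (1/2:ℝ)^(n+1) ≤ r
    · rw [if_pos h]
      constructor
      · linarith
      · have hp : (1/2:ℝ)^(n+1) = (1/2:ℝ)^n * (1/2) := pow_succ _ _
        linarith [ih.2]
    · rw [if_neg h]
      have hp : (1/2:ℝ)^(n+1) = (1/2:ℝ)^n * (1/2) := pow_succ _ _
      constructor
      · linarith [ih.1]
      · linarith [not_le.mp h]

lemma gs_sum (n : ℕ) : gs r n = ∑ m ∈ Finset.range n, term (gx r) m := by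
  induction n with
  | zero => simp [gs]
  | succ n ih => rw [gs_term, ih, Finset.sum_range_succ]

lemma q_surjective (hr : r ∈ Icc (0:ℝ) 1) : ∃ x, q x = r := by
  refine ⟨gx r, ?_⟩
  have h1 : Filter.Tendsto (gs r) Filter.atTop (nhds r) := by
    have hhalf : Filter.Tendsto (fun n : ℕ => (1/2:ℝ)^n) Filter.atTop (nhds 0) := by
      apply tendsto_pow_atTop_nhds_zero_of_lt_one <;> norm_num
    rw [show nhds r = nhds (r - 0) by rw [sub_zero]]
    have h2 : Filter.Tendsto (fun n => r - (1/2:ℝ)^n) Filter.atTop (nhds (r - 0)) :=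
      tendsto_const_nhds.sub hhalf
    refine tendsto_of_tendsto_of_tendsto_of_le_of_le h2 tendsto_const_nhds ?_ ?_
    · intro n
      have := (gs_invariant r hr n).2
      simp only []
      linarith
    · intro n
      have := (gs_invariant r hr n).1
      simp only []
      linarith
  have h2 : Filter.Tendsto (fun n => ∑ m ∈ Finset.range n, term (gx r) m)
      Filter.atTop (nhds (q (gx r))) :=
    (summable_term (gx r)).hasSum.tendsto_sum_nat
  have h3 : (fun n => ∑ m ∈ Finset.range n, term (gx r) m) = gs r := by
    funext n; rw [gs_sum]
  rw [h3] at h2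
  exact (tendsto_nhds_unique h2 h1)

end surj
/-- not eventually constant -/
def NEC (z : ℕ → Bool) : Prop :=
  (∀ N, ∃ m, N ≤ m ∧ z m = true) ∧ (∀ N, ∃ m, N ≤ m ∧ z m = false)

lemma tail_nonneg (u : ℕ → Bool) (n : ℕ) : 0 ≤ ∑' k, term u (k + n) :=
  tsum_nonneg (fun k => term_nonneg u _)

lemma tail_summable (u : ℕ → Bool) (n : ℕ) : Summable (fun k => term u (k + n)) :=
  (summable_term u).comp_injective (add_left_injective n)

lemma summable_wshift (n : ℕ) : Summable (fun k : ℕ => (1/2:ℝ)^(n+k+1)) := by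
  have : (fun k : ℕ => (1/2:ℝ)^(n+k+1)) = fun k => (1/2:ℝ)^n * (1/2:ℝ)^(k+1) := by
    funext k; rw [← pow_add]; ring_nf
  rw [this]
  exact summable_w.mul_left _

lemma tail_le (u : ℕ → Bool) (n : ℕ) : ∑' k, term u (k + n) ≤ (1/2:ℝ)^n := by
  rw [← tsum_w_add n]
  refine Summable.tsum_le_tsum (fun k => ?_) (tail_summable u n) (summable_wshift n)
  have := term_le u (k + n)
  convert this using 2
  · rfl
  · omega

lemma q_eq_of_NEC {z w : ℕ → Bool} (hz : NEC z) (h : q w = q z) : w = z := by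
  by_contra hne
  have hex : ∃ n, ¬ (w n = z n) := by
    by_contra hc
    push_neg at hc
    exact hne (funext hc)
  classical
  set n := Nat.find hex with hn
  have hdiff : ¬ (w n = z n) := Nat.find_spec hex
  have hpre : ∀ i < n, w i = z i := fun i hi => not_not.mp (Nat.find_min hex hi)
  have hsplit : ∀ u : ℕ → Bool, q u = (∑ m ∈ Finset.range n, term u m) + term u n
      + ∑' k, term u (k + (n+1)) := by
    intro u
    have := Summable.sum_add_tsum_nat_add (f := term u) (n+1) (summable_term u)
    rw [Finset.sum_range_succ] at this
    rw [q, ← this]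
    try ring
  have hP : ∑ m ∈ Finset.range n, term w m = ∑ m ∈ Finset.range n, term z m := by
    apply Finset.sum_congr rfl
    intro m hm
    rw [term, term, hpre m (Finset.mem_range.mp hm)]
  have hqz := hsplit z
  have hqw := hsplit w
  rw [h, hqz] at hqw
  rw [hP] at hqw
  -- hqw : rest equal
  have hkey : term z n + ∑' k, term z (k + (n+1)) = term w n + ∑' k, term w (k + (n+1)) := by
    linarith [hqw]
  cases hzn : z n with
  | true =>
    have hwn : w n = false := by
      cases hw : w n
      · rfl
      · exact absurd (hw.trans hzn.symm) hdiff
    rw [show term z n = (1/2:ℝ)^(n+1) by simp [term, hzn],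
      show term w n = 0 by simp [term, hwn]] at hkey
    have hRz0 : ∑' k, term z (k + (n+1)) ≤ 0 := by
      have := tail_le w (n+1)
      linarith
    have hRz : ∑' k, term z (k + (n+1)) = 0 :=
      le_antisymm hRz0 (tail_nonneg z (n+1))
    have hall : ∀ m, n + 1 ≤ m → z m = false := by
      intro m hm
      have hterm : term z ((m - (n+1)) + (n+1)) ≤ 0 := by
        rw [← hRz]
        exact Summable.le_tsum (tail_summable z (n+1)) _ (fun i _ => term_nonneg z _)
      have hm' : (m - (n+1)) + (n+1) = m := by omega
      rw [hm'] at hterm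
      cases hzm : z m
      · rfl
      · exfalso
        rw [term, hzm] at hterm
        simp only [cond_true] at hterm
        have : (0:ℝ) < (1/2:ℝ)^(m+1) := by positivity
        linarith
    obtain ⟨m, hm1, hm2⟩ := hz.1 (n+1)
    rw [hall m hm1] at hm2
    simp at hm2
  | false =>
    have hwn : w n = true := by
      cases hw : w n
      · exact absurd (hw.trans hzn.symm) hdiff
      · rfl
    rw [show term z n = 0 by simp [term, hzn],
      show term w n = (1/2:ℝ)^(n+1) by simp [term, hwn]] at hkey
    -- Rz = (1/2)^(n+1) + Rw, and Rz ≤ (1/2)^(n+1), so Rw = 0 and Rz is maximal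
    have hRzmax : ∑' k, term z (k + (n+1)) = (1/2:ℝ)^(n+1) := by
      have h1 := tail_le z (n+1)
      have h2 := tail_nonneg w (n+1)
      linarith
    -- consider the deficiency series
    have hdef : ∑' k, ((1/2:ℝ)^((n+1)+k+1) - term z (k + (n+1))) = 0 := by
      rw [Summable.tsum_sub (summable_wshift (n+1)) (tail_summable z (n+1)), tsum_w_add, hRzmax,
        sub_self]
    have hall : ∀ m, n + 1 ≤ m → z m = true := by
      intro m hm
      have hterm : (1/2:ℝ)^((n+1)+(m - (n+1))+1) - term z ((m - (n+1)) + (n+1)) ≤ 0 := by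
        rw [← hdef]
        refine Summable.le_tsum ((summable_wshift (n+1)).sub (tail_summable z (n+1))) _
          (fun i _ => ?_)
        have h3 := term_le z (i + (n+1))
        have h4 : (n+1) + i + 1 = (i + (n+1)) + 1 := by omega
        rw [h4]
        linarith
      have hm' : (m - (n+1)) + (n+1) = m := by omega
      have hm'' : (n+1) + (m - (n+1)) + 1 = m + 1 := by omega
      rw [hm', hm''] at hterm
      cases hzm : z m
      · exfalso
        rw [term, hzm] at hterm
        simp only [cond_false] at hterm
        have : (0:ℝ) < (1/2:ℝ)^(m+1) := by positivity
        linarith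
      · rfl
    obtain ⟨m, hm1, hm2⟩ := hz.2 (n+1)
    rw [hall m hm1] at hm2
    simp at hm2

/-- NEC points agreeing with a given point on an initial segment -/
lemma NEC_dense (x : ℕ → Bool) (n : ℕ) :
    ∃ z : ℕ → Bool, (∀ i < n, z i = x i) ∧ NEC z := by
  classical
  refine ⟨fun i => if i < n then x i else decide (i % 2 = 0), fun i hi => by simp [hi], ?_, ?_⟩
  · intro N
    refine ⟨2 * (max N n), ?_, ?_⟩
    · have := le_max_left N n; omega
    · have h1 : ¬ (2 * (max N n) < n) := by have := le_max_right N n; omega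
      simp [h1, Nat.mul_mod_right]
  · intro N
    refine ⟨2 * (max N n) + 1, ?_, ?_⟩
    · have := le_max_left N n; omega
    · have h1 : ¬ (2 * (max N n) + 1 < n) := by have := le_max_right N n; omega
      have h2 : (2 * (max N n) + 1) % 2 = 1 := by omega
      simp [h1, h2]

/-- cylinders are open -/
lemma cylinder_isOpen (x : ℕ → Bool) (n : ℕ) : IsOpen {y : ℕ → Bool | ∀ i < n, y i = x i} := by
  have : {y : ℕ → Bool | ∀ i < n, y i = x i}
      = ⋂ i ∈ Finset.range n, (fun y : ℕ → Bool => y i) ⁻¹' {x i} := by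
    ext y
    simp [Set.mem_iInter]
  rw [this]
  apply isOpen_biInter_finset
  intro i _
  exact (continuous_apply i).isOpen_preimage _ (isOpen_discrete _)

/-- approximating an arbitrary point of a cylinder by NEC points -/
lemma mem_closure_of_cylinder {B : Set (ℕ → Bool)} {x : ℕ → Bool} {n : ℕ}
    (hB : ∀ z : ℕ → Bool, (∀ i < n, z i = x i) → NEC z → z ∈ B) :
    ∀ v : ℕ → Bool, (∀ i < n, v i = x i) → v ∈ closure B := by
  intro v hv
  have hseq : ∀ m : ℕ, ∃ z : ℕ → Bool, (∀ i < max n m, z i = v i) ∧ NEC z :=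
    fun m => NEC_dense v (max n m)
  choose zs hzs1 hzs2 using hseq
  have hzB : ∀ m, zs m ∈ B := by
    intro m
    apply hB
    · intro i hi
      rw [hzs1 m i (lt_of_lt_of_le hi (le_max_left n m))]
      exact hv i hi
    · exact hzs2 m
  have htend : Filter.Tendsto zs Filter.atTop (nhds v) := by
    rw [tendsto_pi_nhds]
    intro i
    apply tendsto_const_nhds.congr'
    filter_upwards [Filter.eventually_ge_atTop (i+1)] with m hm
    exact (hzs1 m i (lt_of_lt_of_le (by omega) (le_max_right n m))).symm
  exact mem_closure_of_tendsto htend (Filter.Eventually.of_forall hzB)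

/-- **Master lemma**: the binary-expansion image of a closed set with empty interior
has empty interior in `ℝ`. -/
lemma interior_q_image (B : Set (ℕ → Bool)) (hBc : IsClosed B) (hBi : interior B = ∅) :
    interior (q '' B) = ∅ := by
  by_contra hne
  obtain ⟨t, ht⟩ := Set.nonempty_iff_ne_empty.mpr hne
  obtain ⟨ε, hε, hball⟩ := Metric.isOpen_iff.mp isOpen_interior t ht
  have hball' : Metric.ball t ε ⊆ q '' B := hball.trans interior_subset
  have htmem : t ∈ q '' B := interior_subset ht
  obtain ⟨z₀, hz₀B, hz₀⟩ := htmem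
  obtain ⟨n, hn⟩ : ∃ n : ℕ, (1/2:ℝ)^n < ε := by
    obtain ⟨n, hn⟩ := exists_pow_lt_of_lt_one hε (by norm_num : (1/2:ℝ) < 1)
    exact ⟨n, hn⟩
  -- every point of the cylinder of z₀ at level n which is NEC lies in B
  have hcylNEC : ∀ z : ℕ → Bool, (∀ i < n, z i = z₀ i) → NEC z → z ∈ B := by
    intro z hpre hz
    have hclose : |q z - q z₀| ≤ (1/2:ℝ)^n := q_prefix_close hpre
    have hmem : q z ∈ Metric.ball t ε := by
      rw [Metric.mem_ball, Real.dist_eq, ← hz₀]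
      exact lt_of_le_of_lt hclose hn
    obtain ⟨w, hwB, hwq⟩ := hball' hmem
    rwa [← q_eq_of_NEC hz hwq]
  have hcyl : {y : ℕ → Bool | ∀ i < n, y i = z₀ i} ⊆ B := by
    intro v hv
    rw [← hBc.closure_eq]
    exact mem_closure_of_cylinder hcylNEC v hv
  have : z₀ ∈ interior B :=
    interior_maximal hcyl (cylinder_isOpen z₀ n) (fun i _ => rfl)
  rw [hBi] at this
  exact this

/-! ### unions of closed sets with empty interior -/

lemma interior_union_empty {X : Type*} [TopologicalSpace X] {A B : Set X}
    (hA : IsClosed A) (hAi : interior A = ∅) (hBi : interior B = ∅) :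
    interior (A ∪ B) = ∅ := by
  have hsub : interior (A ∪ B) ⊆ A := by
    by_contra hc
    obtain ⟨y, hy1, hy2⟩ := Set.not_subset.mp hc
    have hopen : IsOpen (interior (A ∪ B) ∩ Aᶜ) := isOpen_interior.inter hA.isOpen_compl
    have hsubB : interior (A ∪ B) ∩ Aᶜ ⊆ B := by
      intro u hu
      rcases interior_subset hu.1 with h | h
      · exact absurd h hu.2
      · exact h
    have : interior (A ∪ B) ∩ Aᶜ ⊆ interior B := interior_maximal hsubB hopen
    rw [hBi] at this
    exact this ⟨hy1, hy2⟩
  have h2 := interior_maximal hsub isOpen_interior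
  rw [hAi] at h2
  exact Set.subset_empty_iff.mp h2

/-! ### the interleaving homeomorphism -/

/-- interleaving two binary sequences -/
def ι (p : (ℕ → Bool) × (ℕ → Bool)) : ℕ → Bool :=
  fun n => if n % 2 = 0 then p.1 (n/2) else p.2 (n/2)

lemma ι_even (p : (ℕ → Bool) × (ℕ → Bool)) (k : ℕ) : ι p (2*k) = p.1 k := by
  have h1 : (2*k) % 2 = 0 := by omega
  have h2 : (2*k) / 2 = k := by omega
  rw [ι, if_pos h1, h2]

lemma ι_odd (p : (ℕ → Bool) × (ℕ → Bool)) (k : ℕ) : ι p (2*k+1) = p.2 k := by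
  have h1 : ¬ ((2*k+1) % 2 = 0) := by omega
  have h2 : (2*k+1) / 2 = k := by omega
  rw [ι, if_neg h1, h2]

lemma ι_continuous : Continuous ι := by
  refine continuous_pi fun n => ?_
  show Continuous fun p : (ℕ → Bool) × (ℕ → Bool) => if n % 2 = 0 then p.1 (n/2) else p.2 (n/2)
  by_cases h : n % 2 = 0
  · simp only [if_pos h]
    exact (continuous_apply (n/2)).comp continuous_fst
  · simp only [if_neg h]
    exact (continuous_apply (n/2)).comp continuous_snd

lemma ι_bijective : Function.Bijective ι := by
  constructor
  · intro p p' h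
    have h1 : ∀ k, p.1 k = p'.1 k := by
      intro k
      rw [← ι_even p k, ← ι_even p' k, h]
    have h2 : ∀ k, p.2 k = p'.2 k := by
      intro k
      rw [← ι_odd p k, ← ι_odd p' k, h]
    exact Prod.ext (funext h1) (funext h2)
  · intro z
    refine ⟨(fun k => z (2*k), fun k => z (2*k+1)), funext fun n => ?_⟩
    by_cases h : n % 2 = 0
    · have h2 : 2 * (n / 2) = n := by omega
      rw [ι, if_pos h]
      show z (2 * (n/2)) = z n
      rw [h2]
    · have h2 : 2 * (n / 2) + 1 = n := by omega
      rw [ι, if_neg h]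
      show z (2 * (n/2) + 1) = z n
      rw [h2]

/-- the interleaving homeomorphism -/
def ιh : ((ℕ → Bool) × (ℕ → Bool)) ≃ₜ (ℕ → Bool) :=
  Continuous.homeoOfEquivCompactToT2 (f := Equiv.ofBijective ι ι_bijective) ι_continuous

lemma ιh_apply (p : (ℕ → Bool) × (ℕ → Bool)) : ιh p = ι p := rfl

/-! ### no isolated points in Cantor space -/

lemma exists_ne_mem_of_isOpen {V : Set (ℕ → Bool)} {y : ℕ → Bool}
    (hV : IsOpen V) (hy : y ∈ V) : ∃ y' ∈ V, y' ≠ y := by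
  have htend : Filter.Tendsto (fun m => Function.update y m (! y m)) Filter.atTop (nhds y) := by
    rw [tendsto_pi_nhds]
    intro i
    apply tendsto_const_nhds.congr'
    filter_upwards [Filter.eventually_ge_atTop (i+1)] with m hm
    rw [Function.update_of_ne (by omega) _ y]
  have hev := htend.eventually (hV.mem_nhds hy)
  obtain ⟨m, hm⟩ := hev.exists
  refine ⟨Function.update y m (! y m), hm, ?_⟩
  intro hc
  have := congrFun hc m
  rw [Function.update_self] at this
  cases h : y m <;> rw [h] at this <;> simp at this

/-! ### graphs of continuous functions are closed with empty interior -/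

def Bset (f : (ℕ → Bool) → (ℕ → Bool)) : Set ((ℕ → Bool) × (ℕ → Bool)) :=
  {p | f p.1 = p.2 ∨ f p.2 = p.1}

lemma Bset_isClosed {f : (ℕ → Bool) → (ℕ → Bool)} (hf : Continuous f) :
    IsClosed (Bset f) := by
  have h1 : IsClosed {p : (ℕ → Bool) × (ℕ → Bool) | f p.1 = p.2} :=
    isClosed_eq (hf.comp continuous_fst) continuous_snd
  have h2 : IsClosed {p : (ℕ → Bool) × (ℕ → Bool) | f p.2 = p.1} :=
    isClosed_eq (hf.comp continuous_snd) continuous_fst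
  exact h1.union h2

lemma graph_interior_empty (f : (ℕ → Bool) → (ℕ → Bool)) :
    interior {p : (ℕ → Bool) × (ℕ → Bool) | f p.1 = p.2} = ∅ := by
  by_contra hne
  obtain ⟨p₀, hp₀⟩ := Set.nonempty_iff_ne_empty.mpr hne
  obtain ⟨U, V, hU, hV, hxU, hyV, hUV⟩ :=
    isOpen_prod_iff.mp isOpen_interior p₀.1 p₀.2 hp₀
  have hUV' : U ×ˢ V ⊆ {p : (ℕ → Bool) × (ℕ → Bool) | f p.1 = p.2} :=
    hUV.trans interior_subset
  obtain ⟨y', hy'V, hy'ne⟩ := exists_ne_mem_of_isOpen hV hyV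
  have h1 : f p₀.1 = p₀.2 := hUV' (Set.mk_mem_prod hxU hyV)
  have h2 : f p₀.1 = y' := hUV' (Set.mk_mem_prod hxU hy'V)
  exact hy'ne (h2 ▸ h1 ▸ rfl)

lemma graph2_interior_empty (f : (ℕ → Bool) → (ℕ → Bool)) :
    interior {p : (ℕ → Bool) × (ℕ → Bool) | f p.2 = p.1} = ∅ := by
  by_contra hne
  obtain ⟨p₀, hp₀⟩ := Set.nonempty_iff_ne_empty.mpr hne
  obtain ⟨U, V, hU, hV, hxU, hyV, hUV⟩ :=
    isOpen_prod_iff.mp isOpen_interior p₀.1 p₀.2 hp₀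
  have hUV' : U ×ˢ V ⊆ {p : (ℕ → Bool) × (ℕ → Bool) | f p.2 = p.1} :=
    hUV.trans interior_subset
  obtain ⟨x', hx'U, hx'ne⟩ := exists_ne_mem_of_isOpen hU hxU
  have h1 : f p₀.2 = p₀.1 := hUV' (Set.mk_mem_prod hxU hyV)
  have h2 : f p₀.2 = x' := hUV' (Set.mk_mem_prod hx'U hyV)
  exact hx'ne (h2 ▸ h1 ▸ rfl)

lemma Bset_interior_empty {f : (ℕ → Bool) → (ℕ → Bool)} (hf : Continuous f) :
    interior (Bset f) = ∅ := by
  have h1 : IsClosed {p : (ℕ → Bool) × (ℕ → Bool) | f p.1 = p.2} :=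
    isClosed_eq (hf.comp continuous_fst) continuous_snd
  exact interior_union_empty h1 (graph_interior_empty f) (graph2_interior_empty f)

/-! ### the induced nowhere dense subsets of `[0,1]` -/

/-- the trace of a self-map of Cantor space on `[0,1]` -/
def Nset (f : (ℕ → Bool) → (ℕ → Bool)) : Set ℝ := (fun p => q (ι p)) '' Bset f

lemma q_continuous : Continuous q := by
  rw [continuous_iff_continuousAt]
  intro x
  rw [ContinuousAt, Metric.tendsto_nhds]
  intro ε hε
  obtain ⟨n, hn⟩ := exists_pow_lt_of_lt_one hε (by norm_num : (1/2:ℝ) < 1)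
  have hopen := cylinder_isOpen x n
  have hmem : x ∈ {y : ℕ → Bool | ∀ i < n, y i = x i} := fun i _ => rfl
  filter_upwards [hopen.mem_nhds hmem] with y hy
  rw [Real.dist_eq]
  exact lt_of_le_of_lt (q_prefix_close hy) hn

lemma Nset_isClosed {f : (ℕ → Bool) → (ℕ → Bool)} (hf : Continuous f) :
    IsClosed (Nset f) := by
  have hcomp : IsCompact (Bset f) := (Bset_isClosed hf).isCompact
  exact (hcomp.image (q_continuous.comp ι_continuous)).isClosed

lemma Nset_subset {f : (ℕ → Bool) → (ℕ → Bool)} : Nset f ⊆ Icc (0:ℝ) 1 := by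
  rintro t ⟨p, _, rfl⟩
  exact q_mem _

lemma Nset_interior_empty {f : (ℕ → Bool) → (ℕ → Bool)} (hf : Continuous f) :
    interior (Nset f) = ∅ := by
  have himg : Nset f = q '' (ιh '' Bset f) := by
    rw [Nset, Set.image_image]
    rfl
  rw [himg]
  apply interior_q_image
  · exact (ιh.isClosed_image).mpr (Bset_isClosed hf)
  · rw [← Homeomorph.image_interior, Bset_interior_empty hf, Set.image_empty]

lemma Nset_cover {F : Set ((ℕ → Bool) → (ℕ → Bool))}
    (htrans : ∀ x y, ∃ f ∈ F, f x = y ∨ f y = x)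
    {t : ℝ} (ht : t ∈ Icc (0:ℝ) 1) : ∃ f ∈ F, t ∈ Nset f := by
  obtain ⟨z, hz⟩ := q_surjective t ht
  obtain ⟨p, hp⟩ := ι_bijective.2 z
  obtain ⟨f, hf, hor⟩ := htrans p.1 p.2
  exact ⟨f, hf, ⟨p, hor, by simp only []; rw [hp, hz]⟩⟩

/-! ### embedding Cantor space around a closed set with empty interior -/

section Embed

variable (K : Set ℝ)

lemma gap_ex (hK : IsClosed K) (hKi : interior K = ∅) {a b : ℝ} (hab : a < b) :
    ∃ cd : ℝ × ℝ, a < cd.1 ∧ cd.1 < cd.2 ∧ cd.2 < b ∧ Set.Ioo cd.1 cd.2 ∩ K = ∅ ∧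
      cd.1 - a ≤ 2/3*(b-a) ∧ b - cd.2 ≤ 2/3*(b-a) := by
  obtain ⟨m₁, hm₁⟩ : ∃ m₁ : ℝ, m₁ = a + (b-a)/3 := ⟨_, rfl⟩
  obtain ⟨m₂, hm₂⟩ : ∃ m₂ : ℝ, m₂ = b - (b-a)/3 := ⟨_, rfl⟩
  have hm : m₁ < m₂ := by rw [hm₁, hm₂]; linarith
  have hnot : ¬ (Set.Ioo m₁ m₂ ⊆ K) := by
    intro hsub
    have h1 := interior_maximal hsub isOpen_Ioo
    rw [hKi] at h1
    obtain ⟨p, hp⟩ := Set.nonempty_Ioo.mpr hm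
    exact h1 hp
  obtain ⟨p, hpI, hpK⟩ := Set.not_subset.mp hnot
  obtain ⟨ε, hε, hballK⟩ := Metric.isOpen_iff.mp hK.isOpen_compl p hpK
  have hpm₁ : m₁ < p := hpI.1
  have hpm₂ : p < m₂ := hpI.2
  obtain ⟨δ, hδdef⟩ : ∃ δ : ℝ, δ = min (ε/2) (min ((p - m₁)/2) ((m₂ - p)/2)) := ⟨_, rfl⟩
  have hδ : 0 < δ := by
    have ha1 : 0 < (p - m₁)/2 := by linarith
    have ha2 : 0 < (m₂ - p)/2 := by linarith
    have ha3 : 0 < ε/2 := by linarith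
    simp only [hδdef, lt_min_iff]
    exact ⟨ha3, ha1, ha2⟩
  have hδ1 : δ ≤ ε/2 := hδdef ▸ min_le_left _ _
  have hδ2 : δ ≤ (p - m₁)/2 := hδdef ▸ (min_le_right _ _).trans (min_le_left _ _)
  have hδ3 : δ ≤ (m₂ - p)/2 := hδdef ▸ (min_le_right _ _).trans (min_le_right _ _)
  have ham₁ : a < m₁ := by rw [hm₁]; linarith
  have hm₂b : m₂ < b := by rw [hm₂]; linarith
  refine ⟨(p - δ, p + δ), ?_, ?_, ?_, ?_, ?_, ?_⟩
  · show a < p - δ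
    linarith
  · show p - δ < p + δ
    linarith
  · show p + δ < b
    linarith
  · show Set.Ioo (p - δ) (p + δ) ∩ K = ∅
    apply Set.eq_empty_iff_forall_notMem.mpr
    rintro u ⟨⟨hu1, hu2⟩, huK⟩
    have : u ∈ Metric.ball p ε := by
      rw [Metric.mem_ball, Real.dist_eq, abs_sub_lt_iff]
      constructor <;> linarith
    exact hballK this huK
  · show (p - δ) - a ≤ 2/3*(b-a)
    have : m₂ - a = 2/3*(b-a) := by rw [hm₂]; ring
    linarith
  · show b - (p + δ) ≤ 2/3*(b-a)
    have : b - m₁ = 2/3*(b-a) := by rw [hm₁]; ring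
    linarith

variable (hK : IsClosed K) (hKi : interior K = ∅)

/-- one splitting step of the interval scheme -/
def stepI (p : ℝ × ℝ) (bit : Bool) : ℝ × ℝ :=
  if h : p.1 < p.2 then
    cond bit ((Classical.choose (gap_ex K hK hKi h)).2, p.2)
      (p.1, (Classical.choose (gap_ex K hK hKi h)).1)
  else p

/-- the interval scheme -/
def Tl (s : List Bool) : ℝ × ℝ := s.foldl (stepI K hK hKi) (0, 1)

lemma Tl_concat (s : List Bool) (b : Bool) :
    Tl K hK hKi (s ++ [b]) = stepI K hK hKi (Tl K hK hKi s) b := by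
  simp [Tl, List.foldl_append]

lemma step_spec {p : ℝ × ℝ} (h : p.1 < p.2) :
    ∃ cd : ℝ × ℝ, (p.1 < cd.1 ∧ cd.1 < cd.2 ∧ cd.2 < p.2 ∧ Set.Ioo cd.1 cd.2 ∩ K = ∅ ∧
      cd.1 - p.1 ≤ 2/3*(p.2-p.1) ∧ p.2 - cd.2 ≤ 2/3*(p.2-p.1)) ∧
      stepI K hK hKi p false = (p.1, cd.1) ∧ stepI K hK hKi p true = (cd.2, p.2) := by
  refine ⟨Classical.choose (gap_ex K hK hKi h), Classical.choose_spec (gap_ex K hK hKi h), ?_, ?_⟩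
  · rw [stepI, dif_pos h]; rfl
  · rw [stepI, dif_pos h]; rfl

lemma Tl_mem (s : List Bool) :
    0 ≤ (Tl K hK hKi s).1 ∧ (Tl K hK hKi s).1 < (Tl K hK hKi s).2 ∧ (Tl K hK hKi s).2 ≤ 1 := by
  induction s using List.reverseRecOn with
  | nil => simp [Tl]
  | append_singleton s b ih =>
    obtain ⟨cd, ⟨hc1, hc2, hc3, _, _, _⟩, hf, ht⟩ := step_spec K hK hKi ih.2.1
    rw [Tl_concat]
    cases b
    · rw [hf]
      exact ⟨ih.1, by dsimp; linarith, by dsimp; linarith [ih.2.2]⟩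
    · rw [ht]
      exact ⟨by dsimp; linarith [ih.1], by dsimp; linarith, ih.2.2⟩

lemma Tl_sub (s : List Bool) (b : Bool) :
    Icc (Tl K hK hKi (s ++ [b])).1 (Tl K hK hKi (s ++ [b])).2 ⊆
      Icc (Tl K hK hKi s).1 (Tl K hK hKi s).2 := by
  obtain ⟨cd, ⟨hc1, hc2, hc3, _, _, _⟩, hf, ht⟩ := step_spec K hK hKi (Tl_mem K hK hKi s).2.1
  rw [Tl_concat]
  cases b
  · rw [hf]
    exact Set.Icc_subset_Icc (le_refl _) (by dsimp; linarith)
  · rw [ht]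
    exact Set.Icc_subset_Icc (by dsimp; linarith) (le_refl _)

lemma Tl_len (s : List Bool) :
    (Tl K hK hKi s).2 - (Tl K hK hKi s).1 ≤ (2/3:ℝ)^s.length := by
  induction s using List.reverseRecOn with
  | nil => simp [Tl]
  | append_singleton s b ih =>
    obtain ⟨cd, ⟨hc1, hc2, hc3, _, h5, h6⟩, hf, ht⟩ := step_spec K hK hKi (Tl_mem K hK hKi s).2.1
    have hlen : (s ++ [b]).length = s.length + 1 := by simp
    rw [Tl_concat, hlen, pow_succ]
    have hnn : (0:ℝ) ≤ (2/3:ℝ)^s.length := by positivity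
    cases b
    · rw [hf]
      dsimp
      nlinarith
    · rw [ht]
      dsimp
      nlinarith

lemma Tl_disj (s : List Bool) :
    (Tl K hK hKi (s ++ [false])).2 < (Tl K hK hKi (s ++ [true])).1 := by
  obtain ⟨cd, ⟨hc1, hc2, hc3, _, _, _⟩, hf, ht⟩ := step_spec K hK hKi (Tl_mem K hK hKi s).2.1
  rw [Tl_concat, Tl_concat, hf, ht]
  exact hc2

lemma Tl_trap (s : List Bool) {r : ℝ} (hr : r ∈ K)
    (hmem : r ∈ Icc (Tl K hK hKi s).1 (Tl K hK hKi s).2) :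
    r ∈ Icc (Tl K hK hKi (s ++ [false])).1 (Tl K hK hKi (s ++ [false])).2 ∨
    r ∈ Icc (Tl K hK hKi (s ++ [true])).1 (Tl K hK hKi (s ++ [true])).2 := by
  obtain ⟨cd, ⟨hc1, hc2, hc3, hio, _, _⟩, hf, ht⟩ := step_spec K hK hKi (Tl_mem K hK hKi s).2.1
  rw [Tl_concat, Tl_concat, hf, ht]
  have hnotmem : r ∉ Set.Ioo cd.1 cd.2 := by
    intro hc
    exact Set.eq_empty_iff_forall_notMem.mp hio r ⟨hc, hr⟩
  rw [Set.mem_Ioo, not_and_or, not_lt, not_lt] at hnotmem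
  rcases hnotmem with h | h
  · left
    exact ⟨hmem.1, h⟩
  · right
    exact ⟨h, hmem.2⟩

/-- prefixes of an infinite binary sequence -/
def pre (x : ℕ → Bool) : ℕ → List Bool
  | 0 => []
  | (n+1) => pre x n ++ [x n]

lemma pre_length (x : ℕ → Bool) (n : ℕ) : (pre x n).length = n := by
  induction n with
  | zero => rfl
  | succ n ih => simp [pre, ih]

lemma pre_eq {x y : ℕ → Bool} {n : ℕ} (h : ∀ i < n, y i = x i) : pre y n = pre x n := by
  induction n with
  | zero => rfl
  | succ n ih =>
    rw [pre, pre, ih (fun i hi => h i (by omega)), h n (by omega)]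

lemma Tl_pre_mono (x : ℕ → Bool) {n m : ℕ} (h : n ≤ m) :
    Icc (Tl K hK hKi (pre x m)).1 (Tl K hK hKi (pre x m)).2 ⊆
      Icc (Tl K hK hKi (pre x n)).1 (Tl K hK hKi (pre x n)).2 := by
  induction m, h using Nat.le_induction with
  | base => exact subset_rfl
  | succ m hm ih => exact (Tl_sub K hK hKi (pre x m) (x m)).trans ih

/-- the embedding map -/
def eF (x : ℕ → Bool) : ℝ := ⨆ n, (Tl K hK hKi (pre x n)).1

lemma eF_bdd (x : ℕ → Bool) : BddAbove (Set.range fun n => (Tl K hK hKi (pre x n)).1) := by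
  refine ⟨1, ?_⟩
  rintro t ⟨n, rfl⟩
  have h := Tl_mem K hK hKi (pre x n)
  linarith [h.2.1, h.2.2]

lemma eF_mem (x : ℕ → Bool) (n : ℕ) :
    eF K hK hKi x ∈ Icc (Tl K hK hKi (pre x n)).1 (Tl K hK hKi (pre x n)).2 := by
  constructor
  · exact le_ciSup (eF_bdd K hK hKi x) n
  · apply ciSup_le
    intro m
    rcases le_total m n with h | h
    · have hmem : (Tl K hK hKi (pre x n)).1 ∈
          Icc (Tl K hK hKi (pre x m)).1 (Tl K hK hKi (pre x m)).2 :=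
        Tl_pre_mono K hK hKi x h ⟨le_refl _, le_of_lt (Tl_mem K hK hKi (pre x n)).2.1⟩
      have := (Tl_mem K hK hKi (pre x n)).2.1
      linarith [hmem.1]
    · have hmem : (Tl K hK hKi (pre x m)).1 ∈
          Icc (Tl K hK hKi (pre x n)).1 (Tl K hK hKi (pre x n)).2 :=
        Tl_pre_mono K hK hKi x h ⟨le_refl _, le_of_lt (Tl_mem K hK hKi (pre x m)).2.1⟩
      exact hmem.2

lemma eF_unit (x : ℕ → Bool) : eF K hK hKi x ∈ Icc (0:ℝ) 1 := by
  have h := eF_mem K hK hKi x 0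
  have h0 := Tl_mem K hK hKi (pre x 0)
  simp only [pre] at h
  rw [show Tl K hK hKi [] = ((0:ℝ), (1:ℝ)) from rfl] at h
  exact h

lemma eF_close {x y : ℕ → Bool} {n : ℕ} (h : pre y n = pre x n) :
    |eF K hK hKi x - eF K hK hKi y| ≤ (2/3:ℝ)^n := by
  have h1 := eF_mem K hK hKi x n
  have h2 := eF_mem K hK hKi y n
  rw [h] at h2
  have h3 := Tl_len K hK hKi (pre x n)
  rw [pre_length] at h3
  rw [abs_sub_le_iff]
  constructor <;> [linarith [h1.2, h2.1]; linarith [h1.1, h2.2]]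

lemma eF_continuous : Continuous (eF K hK hKi) := by
  rw [continuous_iff_continuousAt]
  intro x
  rw [ContinuousAt, Metric.tendsto_nhds]
  intro ε hε
  obtain ⟨n, hn⟩ := exists_pow_lt_of_lt_one hε (by norm_num : (2/3:ℝ) < 1)
  have hopen := cylinder_isOpen x n
  have hmem : x ∈ {y : ℕ → Bool | ∀ i < n, y i = x i} := fun i _ => rfl
  filter_upwards [hopen.mem_nhds hmem] with y hy
  rw [Real.dist_eq]
  have := eF_close K hK hKi (x := x) (y := y) (pre_eq hy)
  rw [abs_sub_comm] at this
  exact lt_of_le_of_lt this hn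

lemma eF_injective : Function.Injective (eF K hK hKi) := by
  intro x y hxy
  by_contra hne
  have hex : ∃ n, ¬ (x n = y n) := by
    by_contra hc
    push_neg at hc
    exact hne (funext hc)
  classical
  obtain ⟨n, hdiff, hpre⟩ : ∃ n, ¬ (x n = y n) ∧ ∀ i < n, x i = y i :=
    ⟨Nat.find hex, Nat.find_spec hex, fun i hi => not_not.mp (Nat.find_min hex hi)⟩
  have hpxy : pre x n = pre y n := pre_eq (fun i hi => (hpre i hi))
  have hx1 := eF_mem K hK hKi x (n+1)
  have hy1 := eF_mem K hK hKi y (n+1)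
  rw [show pre x (n+1) = pre x n ++ [x n] from rfl] at hx1
  rw [show pre y (n+1) = pre y n ++ [y n] from rfl, ← hpxy] at hy1
  have hd := Tl_disj K hK hKi (pre x n)
  cases hx : x n with
  | false =>
    have hy' : y n = true := by
      cases hyn : y n
      · exact absurd (hx.trans hyn.symm) hdiff
      · rfl
    rw [hx] at hx1
    rw [hy'] at hy1
    have : eF K hK hKi x < eF K hK hKi y := by
      calc eF K hK hKi x ≤ _ := hx1.2
        _ < _ := hd
        _ ≤ eF K hK hKi y := hy1.1
    rw [hxy] at this
    exact lt_irrefl _ this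
  | true =>
    have hy' : y n = false := by
      cases hyn : y n
      · rfl
      · exact absurd (hx.trans hyn.symm) hdiff
    rw [hx] at hx1
    rw [hy'] at hy1
    have : eF K hK hKi y < eF K hK hKi x := by
      calc eF K hK hKi y ≤ _ := hy1.2
        _ < _ := hd
        _ ≤ eF K hK hKi x := hx1.1
    rw [hxy] at this
    exact lt_irrefl _ this

/-- every point of `K ∩ [0,1]` is in the range of `eF` -/
lemma eF_range (hKs : K ⊆ Icc (0:ℝ) 1) {r : ℝ} (hr : r ∈ K) :
    ∃ x : ℕ → Bool, eF K hK hKi x = r := by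
  classical
  -- build the branch through r
  let pk : List Bool → Bool := fun s =>
    if r ∈ Icc (Tl K hK hKi (s ++ [false])).1 (Tl K hK hKi (s ++ [false])).2 then false else true
  let L : ℕ → List Bool := fun n => Nat.rec [] (fun _ s => s ++ [pk s]) n
  have hL0 : L 0 = [] := rfl
  have hLs : ∀ n, L (n+1) = L n ++ [pk (L n)] := fun n => rfl
  let x : ℕ → Bool := fun n => pk (L n)
  have hpre : ∀ n, pre x n = L n := by
    intro n
    induction n with
    | zero => rfl
    | succ n ih => rw [pre, ih, hLs]
  have hmem : ∀ n, r ∈ Icc (Tl K hK hKi (L n)).1 (Tl K hK hKi (L n)).2 := by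
    intro n
    induction n with
    | zero =>
      rw [hL0]
      rw [show Tl K hK hKi [] = ((0:ℝ), (1:ℝ)) from rfl]
      exact hKs hr
    | succ n ih =>
      rw [hLs]
      rcases Tl_trap K hK hKi (L n) hr ih with h | h
      · have hpk : pk (L n) = false := by simp only [pk, if_pos h]
        rw [hpk]
        exact h
      · by_cases hmem : r ∈ Icc (Tl K hK hKi ((L n) ++ [false])).1 (Tl K hK hKi ((L n) ++ [false])).2
        · have hpk : pk (L n) = false := by simp only [pk, if_pos hmem]
          rw [hpk]
          exact hmem
        · have hpk : pk (L n) = true := by simp only [pk, if_neg hmem]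
          rw [hpk]
          exact h
  refine ⟨x, ?_⟩
  have hclose : ∀ n, |eF K hK hKi x - r| ≤ (2/3:ℝ)^n := by
    intro n
    have h1 := eF_mem K hK hKi x n
    rw [hpre n] at h1
    have h2 := hmem n
    have h3 := Tl_len K hK hKi (L n)
    have hlen : (L n).length = n := by rw [← hpre n, pre_length]
    rw [hlen] at h3
    rw [abs_sub_le_iff]
    constructor <;> [linarith [h1.2, h2.1]; linarith [h1.1, h2.2]]
  have htend : Filter.Tendsto (fun n : ℕ => (2/3:ℝ)^n) Filter.atTop (nhds 0) := by
    apply tendsto_pow_atTop_nhds_zero_of_lt_one <;> norm_num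
  have habs : |eF K hK hKi x - r| ≤ 0 := ge_of_tendsto' htend hclose
  have := abs_nonneg (eF K hK hKi x - r)
  have : |eF K hK hKi x - r| = 0 := le_antisymm habs this
  linarith [abs_eq_zero.mp this, sub_eq_zero.mp (abs_eq_zero.mp this)]

end Embed

/-- **Embedding lemma**: Cantor space embeds into `[0,1]` with image containing any
prescribed closed set with empty interior. -/
lemma embed_exists (K : Set ℝ) (hK : IsClosed K) (hKi : interior K = ∅)
    (hKs : K ⊆ Icc (0:ℝ) 1) :
    ∃ E : (ℕ → Bool) → unitInterval, Continuous E ∧ Function.Injective E ∧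
      ∀ r ∈ K, ∃ z, ((E z : ℝ) = r) := by
  refine ⟨fun x => ⟨eF K hK hKi x, eF_unit K hK hKi x⟩, ?_, ?_, ?_⟩
  · exact Continuous.subtype_mk (eF_continuous K hK hKi) _
  · intro x y hxy
    exact eF_injective K hK hKi (congrArg Subtype.val hxy)
  · intro r hr
    obtain ⟨x, hx⟩ := eF_range K hK hKi hKs hr
    exact ⟨x, hx⟩

/-- **Extension lemma**: a self-map of Cantor space transported through an embedding
into `[0,1]` extends to a continuous self-map of `[0,1]`. -/
lemma extend_exists (E : (ℕ → Bool) → unitInterval) (hEc : Continuous E)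
    (hEi : Function.Injective E) (f : (ℕ → Bool) → (ℕ → Bool)) (hf : Continuous f) :
    ∃ g : unitInterval → unitInterval, Continuous g ∧ ∀ z, g (E z) = E (f z) := by
  have hcomp : IsCompact (Set.range E) := isCompact_range hEc
  have hRc : IsClosed (Set.range E) := hcomp.isClosed
  have hc : Continuous ((Equiv.ofInjective E hEi : (ℕ → Bool) → Set.range E)) :=
    Continuous.subtype_mk hEc _
  let h : (ℕ → Bool) ≃ₜ Set.range E := Continuous.homeoOfEquivCompactToT2 hc
  let φ : C(Set.range E, ℝ) := ⟨fun w => ((E (f (h.symm w)) : ℝ)),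
    continuous_subtype_val.comp (hEc.comp (hf.comp h.symm.continuous))⟩
  obtain ⟨G, hG⟩ := ContinuousMap.exists_restrict_eq hRc φ
  refine ⟨fun t => Set.projIcc 0 1 zero_le_one (G t), ?_, ?_⟩
  · exact continuous_projIcc.comp G.continuous
  intro z
  have hmem : E z ∈ Set.range E := ⟨z, rfl⟩
  have h1 : G (E z) = φ ⟨E z, hmem⟩ := by
    have := DFunLike.congr_fun hG (⟨E z, hmem⟩ : Set.range E)
    simpa [ContinuousMap.restrict_apply] using this
  have h2 : h.symm ⟨E z, hmem⟩ = z := by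
    have h3 : h z = ⟨E z, hmem⟩ := Subtype.ext rfl
    rw [← h3, Homeomorph.symm_apply_apply]
  show Set.projIcc 0 1 zero_le_one (G (E z)) = E (f z)
  rw [h1]
  show Set.projIcc 0 1 zero_le_one ((E (f (h.symm ⟨E z, hmem⟩)) : ℝ)) = E (f z)
  rw [h2, Set.projIcc_val]

/-- finite unions of closed sets with empty interior have empty interior -/
lemma interior_sUnion_finite {S : Set (Set ℝ)} (hfin : S.Finite)
    (hcl : ∀ A ∈ S, IsClosed A) (hint : ∀ A ∈ S, interior A = ∅) :
    interior (⋃₀ S) = ∅ := by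
  refine Set.Finite.induction_on
    (motive := fun S _ => (∀ A ∈ S, IsClosed A) → (∀ A ∈ S, interior A = ∅) → interior (⋃₀ S) = ∅)
    S hfin ?_ ?_ hcl hint
  · intro _ _
    simp
  · intro A S' hA hS' ih hcl' hint'
    rw [Set.sUnion_insert]
    exact interior_union_empty (hcl' A (Set.mem_insert _ _)) (hint' A (Set.mem_insert _ _))
      (ih (fun B hB => hcl' B (Set.mem_insert_of_mem _ hB))
        (fun B hB => hint' B (Set.mem_insert_of_mem _ hB)))

end TFP
end

/-- `tf X` is the least cardinality of a transitive family of continuous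
self-maps of `X`. -/
noncomputable def tf (X : Type*) [TopologicalSpace X] : Cardinal :=
  sInf {c : Cardinal | ∃ F : Set (X → X),
    (∀ f ∈ F, Continuous f) ∧ (∀ x y : X, ∃ f ∈ F, f x = y ∨ f y = x) ∧
    #F = c}

open TFP

/-- If the unit interval is a union of fewer than `𝔠` nowhere dense sets, then
`tf([0,1]) ≤ tf(2^ω)`. -/
theorem tf_unitInterval_le_tf_cantor
    (hcov : ∃ G : Set (Set unitInterval), #G < Cardinal.continuum ∧
        (∀ s ∈ G, IsNowhereDense s) ∧ ⋃₀ G = Set.univ) :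
    tf unitInterval ≤ tf (ℕ → Bool) := by
  clear hcov
  -- a witnessing transitive family of minimal cardinality on Cantor space
  have hne : {c : Cardinal | ∃ F : Set ((ℕ → Bool) → (ℕ → Bool)),
      (∀ f ∈ F, Continuous f) ∧ (∀ x y : ℕ → Bool, ∃ f ∈ F, f x = y ∨ f y = x) ∧
      #F = c}.Nonempty := by
    refine ⟨_, Set.range (fun y (_ : ℕ → Bool) => y), ?_, ?_, rfl⟩
    · rintro f ⟨y, rfl⟩
      exact continuous_const
    · intro x y
      exact ⟨fun _ => y, ⟨y, rfl⟩, Or.inl rfl⟩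
  obtain ⟨F, hFc, hFt, hFcard⟩ := csInf_mem hne
  -- the family is infinite
  have haleph : ℵ₀ ≤ #F := by
    by_contra hlt
    push_neg at hlt
    have hfin : F.Finite := by
      rwa [Cardinal.lt_aleph0_iff_set_finite] at hlt
    have hSfin : (Nset '' F).Finite := hfin.image _
    have hintu : interior (⋃₀ (Nset '' F)) = ∅ := by
      apply interior_sUnion_finite hSfin
      · rintro A ⟨f, hf, rfl⟩
        exact Nset_isClosed (hFc f hf)
      · rintro A ⟨f, hf, rfl⟩
        exact Nset_interior_empty (hFc f hf)
    have hIoo : Set.Ioo (0:ℝ) 1 ⊆ interior (⋃₀ (Nset '' F)) := by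
      apply interior_maximal _ isOpen_Ioo
      intro t ht
      obtain ⟨f, hf, hmem⟩ := Nset_cover hFt (Set.mem_Icc_of_Ioo ht)
      exact ⟨Nset f, ⟨f, hf, rfl⟩, hmem⟩
    rw [hintu] at hIoo
    exact hIoo (by norm_num : (1/2:ℝ) ∈ Set.Ioo (0:ℝ) 1)
  -- build embeddings around each pair of trace sets
  have hKprop : ∀ f₁ f₂ : ↥F, IsClosed (Nset f₁.1 ∪ Nset f₂.1) ∧
      interior (Nset f₁.1 ∪ Nset f₂.1) = ∅ ∧ (Nset f₁.1 ∪ Nset f₂.1) ⊆ Set.Icc (0:ℝ) 1 := by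
    intro f₁ f₂
    refine ⟨(Nset_isClosed (hFc f₁.1 f₁.2)).union (Nset_isClosed (hFc f₂.1 f₂.2)), ?_, ?_⟩
    · exact interior_union_empty (Nset_isClosed (hFc f₁.1 f₁.2))
        (Nset_interior_empty (hFc f₁.1 f₁.2)) (Nset_interior_empty (hFc f₂.1 f₂.2))
    · exact Set.union_subset Nset_subset Nset_subset
  choose E hEc hEi hEr using fun f₁ f₂ : ↥F =>
    embed_exists (Nset f₁.1 ∪ Nset f₂.1) (hKprop f₁ f₂).1 (hKprop f₁ f₂).2.1 (hKprop f₁ f₂).2.2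
  choose g hgc hgs using fun (f₁ f₂ f : ↥F) =>
    extend_exists (E f₁ f₂) (hEc f₁ f₂) (hEi f₁ f₂) f.1 (hFc f.1 f.2)
  -- the transitive family on the unit interval
  have hmain : tf unitInterval ≤ #(Set.range (fun t : ↥F × ↥F × ↥F => g t.1 t.2.1 t.2.2)) := by
    apply csInf_le'
    refine ⟨Set.range (fun t : ↥F × ↥F × ↥F => g t.1 t.2.1 t.2.2), ?_, ?_, rfl⟩
    · rintro g' ⟨t, rfl⟩
      exact hgc t.1 t.2.1 t.2.2
    · intro x y
      obtain ⟨f₁, hf₁, hx⟩ := Nset_cover hFt x.2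
      obtain ⟨f₂, hf₂, hy⟩ := Nset_cover hFt y.2
      obtain ⟨zx, hzx⟩ := hEr ⟨f₁, hf₁⟩ ⟨f₂, hf₂⟩ ↑x (Or.inl hx)
      obtain ⟨zy, hzy⟩ := hEr ⟨f₁, hf₁⟩ ⟨f₂, hf₂⟩ ↑y (Or.inr hy)
      have hzx' : E ⟨f₁, hf₁⟩ ⟨f₂, hf₂⟩ zx = x := Subtype.ext hzx
      have hzy' : E ⟨f₁, hf₁⟩ ⟨f₂, hf₂⟩ zy = y := Subtype.ext hzy
      obtain ⟨f, hf, hor⟩ := hFt zx zy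
      refine ⟨g ⟨f₁, hf₁⟩ ⟨f₂, hf₂⟩ ⟨f, hf⟩, ⟨(⟨f₁, hf₁⟩, ⟨f₂, hf₂⟩, ⟨f, hf⟩), rfl⟩, ?_⟩
      rcases hor with h | h
      · left
        rw [← hzx', hgs ⟨f₁, hf₁⟩ ⟨f₂, hf₂⟩ ⟨f, hf⟩ zx]
        show E ⟨f₁, hf₁⟩ ⟨f₂, hf₂⟩ (f zx) = y
        rw [h, hzy']
      · right
        rw [← hzy', hgs ⟨f₁, hf₁⟩ ⟨f₂, hf₂⟩ ⟨f, hf⟩ zy]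
        show E ⟨f₁, hf₁⟩ ⟨f₂, hf₂⟩ (f zy) = x
        rw [h, hzx']
  -- cardinality bound
  have hcardle : #(Set.range (fun t : ↥F × ↥F × ↥F => g t.1 t.2.1 t.2.2)) ≤ #F := by
    refine le_trans Cardinal.mk_range_le ?_
    have hprod : #(↥F × ↥F × ↥F) = #F * (#F * #F) := by
      simp [Cardinal.mk_prod, Cardinal.lift_id]
    rw [hprod, Cardinal.mul_eq_self haleph, Cardinal.mul_eq_self haleph]
  calc tf unitInterval ≤ _ := hmain
    _ ≤ #F := hcardle
    _ = tf (ℕ → Bool) := hFcard
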